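/- Let E : [0,∞) × ℝ³ → ℝ³ satisfy sup_{t≥0} (1+t)^{α+1}‖E(t,·)‖_{L^∞} ≤ η₀ with α > 1. Then the finite-time wave operator W_c(t)(x,p) = (X_c(t) − t v_c(P_c(t)), P_c(t)) converges uniformly in (x,p) as t → ∞, with |W_c(t)(x,p) − W_c^+(x,p)| ≤ C η₀ (1+t)^{−(α−1)} for a constant C independent of c, t, x, p. -/

import Mathlib

/-!
Along a characteristic, `P' = E = O((1+t)^{-(α+1)})`, and `X - t v_c(P)` has derivative
`-t Dv_c(P) E = O((1+t)^{-α})` because the Jacobian of `v_c` has operator norm at most `1`,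
uniformly in `c`. Both derivatives are therefore integrable at infinity, so `W_c(t)` is Cauchy as
`t → ∞` with tail `O(η₀ (1+t)^{-(α-1)})`, and its limit inherits this bound.
-/

noncomputable section

/-- The relativistic Lorentz factor `γ_c(p) = √(1 + |p|²/c²)`. -/
def gam (c : ℝ) (p : EuclideanSpace ℝ (Fin 3)) : ℝ := Real.sqrt (1 + ‖p‖ ^ 2 / c ^ 2)

/-- The relativistic velocity `v_c(p) = p / γ_c(p)`. -/
def vel (c : ℝ) (p : EuclideanSpace ℝ (Fin 3)) : EuclideanSpace ℝ (Fin 3) :=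
  (gam c p)⁻¹ • p

open RealInnerProductSpace Topology Filter

local notation "ℝ³" => EuclideanSpace ℝ (Fin 3)

lemma one_le_gam (c : ℝ) (p : ℝ³) : 1 ≤ gam c p :=
  Real.one_le_sqrt.mpr (le_add_of_nonneg_right (by positivity))

lemma gam_pos (c : ℝ) (p : ℝ³) : 0 < gam c p := one_pos.trans_le (one_le_gam c p)

lemma gam_sq (c : ℝ) (p : ℝ³) : gam c p ^ 2 = 1 + ‖p‖ ^ 2 / c ^ 2 :=
  Real.sq_sqrt (by positivity)

lemma hasFDerivAt_gam (c : ℝ) (p : ℝ³) :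
    HasFDerivAt (gam c) ((c ^ 2 * gam c p)⁻¹ • innerSL ℝ p) p := by
  have h := (((hasStrictFDerivAt_norm_sq p).hasFDerivAt.mul_const (c ^ 2)⁻¹).const_add 1).sqrt
    (by positivity)
  simp only [← div_eq_mul_inv] at h
  refine h.congr_fderiv ?_
  rw [← Nat.cast_smul_eq_nsmul ℝ, smul_smul, smul_smul]
  congr 1
  simp only [gam]
  field_simp
  norm_num

def velDeriv (c : ℝ) (p : ℝ³) : ℝ³ →L[ℝ] ℝ³ :=
  (gam c p)⁻¹ • ContinuousLinearMap.id ℝ ℝ³ -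
    (c ^ 2 * gam c p ^ 3)⁻¹ • (innerSL ℝ p).smulRight p

lemma velDeriv_apply (c : ℝ) (p h : ℝ³) :
    velDeriv c p h = (gam c p)⁻¹ • h - (⟪p, h⟫ / (c ^ 2 * gam c p ^ 3)) • p := by
  simp [velDeriv, smul_smul, div_eq_inv_mul]

lemma hasFDerivAt_vel (c : ℝ) (p : ℝ³) : HasFDerivAt (vel c) (velDeriv c p) p := by
  have h := ((hasDerivAt_inv (gam_pos c p).ne').comp_hasFDerivAt p (hasFDerivAt_gam c p)).smul
    (hasFDerivAt_id p)
  refine h.congr_fderiv ?_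
  ext1 h
  simp only [velDeriv_apply, add_apply, smul_apply, ContinuousLinearMap.smulRight_apply,
    ContinuousLinearMap.id_apply, innerSL_apply_apply, Function.comp_apply, smul_smul, id]
  rw [sub_eq_add_neg, ← neg_smul]
  congr 2
  field_simp
  ring

lemma norm_velDeriv_le {c : ℝ} (hc : c ≠ 0) (p : ℝ³) : ‖velDeriv c p‖ ≤ 1 := by
  refine ContinuousLinearMap.opNorm_le_bound _ zero_le_one fun h => ?_
  rw [one_mul, velDeriv_apply]
  set g := gam c p
  have hg : 0 < g := gam_pos c p
  have hp : ‖p‖ ^ 2 = c ^ 2 * (g ^ 2 - 1) := by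
    rw [gam_sq]
    field_simp
    ring
  -- the component along `p` is shrunk by the factor `1 / g ^ 3`, the rest by `1 / g`
  have hsq : ‖g⁻¹ • h - (⟪p, h⟫ / (c ^ 2 * g ^ 3)) • p‖ ^ 2 =
      ‖h‖ ^ 2 / g ^ 2 - ⟪p, h⟫ ^ 2 * (g ^ 2 + 1) / (c ^ 2 * g ^ 6) := by
    rw [norm_sub_sq_real, norm_smul, norm_smul, real_inner_smul_left, real_inner_smul_right,
      real_inner_comm, mul_pow, mul_pow, Real.norm_eq_abs, Real.norm_eq_abs, sq_abs, sq_abs, hp]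
    field_simp
    ring
  have hle : ‖g⁻¹ • h - (⟪p, h⟫ / (c ^ 2 * g ^ 3)) • p‖ ^ 2 ≤ ‖h‖ ^ 2 := by
    rw [hsq]
    have h₁ : ‖h‖ ^ 2 / g ^ 2 ≤ ‖h‖ ^ 2 :=
      div_le_self (by positivity) (one_le_pow₀ (one_le_gam c p))
    have h₂ : 0 ≤ ⟪p, h⟫ ^ 2 * (g ^ 2 + 1) / (c ^ 2 * g ^ 6) := by positivity
    linarith
  exact pow_le_pow_iff_left₀ (norm_nonneg _) (norm_nonneg _) two_ne_zero |>.mp hle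

lemma hasDerivAt_rpow_neg_one_add {β x : ℝ} (hx : -1 < x) :
    HasDerivAt (fun τ : ℝ => (1 + τ) ^ (-β)) (-β * (1 + x) ^ (-(β + 1))) x := by
  refine ((Real.hasDerivAt_rpow_const (p := -β) (Or.inl (by linarith : 1 + x ≠ 0))).comp x
    ((hasDerivAt_id x).const_add 1)).congr_deriv ?_
  rw [mul_one, neg_add']

lemma norm_sub_le_of_norm_deriv_le_rpow {F : Type*} [NormedAddCommGroup F] [NormedSpace ℝ F]
    {f f' : ℝ → F} {η β : ℝ} (hβ : 0 < β) (hη : 0 ≤ η) (hf : ∀ τ ≥ (0 : ℝ), HasDerivAt f (f' τ) τ)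
    (hf' : ∀ τ ≥ (0 : ℝ), ‖f' τ‖ ≤ η * (1 + τ) ^ (-(β + 1))) {s t : ℝ} (hs : 0 ≤ s)
    (hst : s ≤ t) : ‖f t - f s‖ ≤ η / β * (1 + s) ^ (-β) := by
  set B : ℝ → ℝ := fun τ => η / β * ((1 + s) ^ (-β) - (1 + τ) ^ (-β))
  have hB : ∀ x ≥ s, HasDerivAt B (η * (1 + x) ^ (-(β + 1))) x := fun x hx =>
    (((hasDerivAt_rpow_neg_one_add (by linarith)).const_sub _).const_mul (η / β)).congr_deriv
      (by field_simp)
  have key := image_norm_le_of_norm_deriv_right_le_deriv_boundary' (a := s) (b := t)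
    (f := fun τ => f τ - f s) (f' := f') (B := B)
    (fun x hx => ((hf x (hs.trans hx.1)).sub_const _).continuousAt.continuousWithinAt)
    (fun x hx => ((hf x (hs.trans hx.1)).sub_const _).hasDerivWithinAt) (by simp [B])
    (fun x hx => (hB x hx.1).continuousAt.continuousWithinAt)
    (fun x hx => (hB x hx.1).hasDerivWithinAt) (fun x hx => hf' x (hs.trans hx.1))
    (Set.right_mem_Icc.mpr hst)
  calc ‖f t - f s‖ ≤ B t := key
    _ ≤ η / β * (1 + s) ^ (-β) := by
      have : 0 ≤ (1 + t) ^ (-β) := Real.rpow_nonneg (by linarith) _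
      have : 0 ≤ η / β := by positivity
      simp only [B]
      nlinarith

lemma exists_forall_norm_sub_le_of_norm_sub_le {F : Type*} [NormedAddCommGroup F]
    [CompleteSpace F] {W : ℝ → F} {B : ℝ → ℝ} (hB : Tendsto B atTop (𝓝 0))
    (hW : ∀ s ≥ (0 : ℝ), ∀ t ≥ s, ‖W t - W s‖ ≤ B s) :
    ∃ L, ∀ t ≥ (0 : ℝ), ‖W t - L‖ ≤ B t := by
  have hcauchy : CauchySeq fun n : ℕ => W n :=
    cauchySeq_of_le_tendsto_0' (fun n : ℕ => B n)
      (fun n m hnm => by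
        rw [dist_eq_norm, norm_sub_rev]
        exact hW n n.cast_nonneg m (Nat.cast_le.mpr hnm))
      (hB.comp tendsto_natCast_atTop_atTop)
  obtain ⟨L, hL⟩ := cauchySeq_tendsto_of_complete hcauchy
  refine ⟨L, fun t ht => le_of_tendsto (tendsto_const_nhds.sub hL).norm ?_⟩
  filter_upwards [eventually_ge_atTop ⌈t⌉₊] with n hn
  rw [norm_sub_rev]
  exact hW t ht n ((Nat.le_ceil t).trans (Nat.cast_le.mpr hn))

lemma mul_one_add_rpow_neg_le {τ : ℝ} (hτ : 0 ≤ τ) (β : ℝ) :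
    τ * (1 + τ) ^ (-(β + 1)) ≤ (1 + τ) ^ (-β) := by
  have h : (1 + τ) ^ (-β) = (1 + τ) ^ (-(β + 1)) * (1 + τ) := by
    rw [← Real.rpow_add_one (by linarith)]
    ring_nf
  rw [h, mul_comm]
  exact mul_le_mul_of_nonneg_left (by linarith) (Real.rpow_nonneg (by linarith) _)

/-- The finite-time wave operator `W_c(t)` evaluated along a characteristic `(X, P)`. -/
def waveOp (c : ℝ) (X P : ℝ → ℝ³) (t : ℝ) : ℝ³ × ℝ³ := (X t - t • vel c (P t), P t)

lemma hasDerivAt_sub_smul_vel {c τ : ℝ} {X P : ℝ → ℝ³} {P' : ℝ³}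
    (hX : HasDerivAt X (vel c (P τ)) τ) (hP : HasDerivAt P P' τ) :
    HasDerivAt (fun s => X s - s • vel c (P s)) (-(τ • velDeriv c (P τ) P')) τ := by
  refine (hX.sub ((hasDerivAt_id τ).smul
    ((hasFDerivAt_vel c (P τ)).comp_hasDerivAt τ hP))).congr_deriv ?_
  simp only [id, one_smul, Function.comp_apply]
  abel

lemma norm_waveOp_sub_le {c α η : ℝ} (hc : c ≠ 0) (hα : 1 < α) (hη : 0 ≤ η)
    {X P F : ℝ → ℝ³} (hX : ∀ τ ≥ (0 : ℝ), HasDerivAt X (vel c (P τ)) τ)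
    (hP : ∀ τ ≥ (0 : ℝ), HasDerivAt P (F τ) τ)
    (hF : ∀ τ ≥ (0 : ℝ), ‖F τ‖ ≤ η * (1 + τ) ^ (-(α + 1))) (s : ℝ) (hs : 0 ≤ s)
    (t : ℝ) (hst : s ≤ t) :
    ‖waveOp c X P t - waveOp c X P s‖ ≤ (α - 1)⁻¹ * η * (1 + s) ^ (-(α - 1)) := by
  have hα₀ : 0 < α - 1 := sub_pos.mpr hα
  have hposition : ‖(X t - t • vel c (P t)) - (X s - s • vel c (P s))‖ ≤
      η / (α - 1) * (1 + s) ^ (-(α - 1)) := by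
    refine norm_sub_le_of_norm_deriv_le_rpow hα₀ hη
      (fun τ hτ => hasDerivAt_sub_smul_vel (hX τ hτ) (hP τ hτ)) (fun τ hτ => ?_) hs hst
    calc ‖-(τ • velDeriv c (P τ) (F τ))‖ ≤ τ * ‖F τ‖ := by
          rw [norm_neg, norm_smul, Real.norm_of_nonneg hτ]
          exact mul_le_mul_of_nonneg_left
            ((velDeriv c (P τ)).le_of_opNorm_le (norm_velDeriv_le hc _) _ |>.trans_eq (one_mul _))
            hτ
      _ ≤ τ * (η * (1 + τ) ^ (-(α + 1))) := mul_le_mul_of_nonneg_left (hF τ hτ) hτ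
      _ ≤ η * (1 + τ) ^ (-(α - 1 + 1)) := by
          rw [sub_add_cancel, mul_left_comm]
          exact mul_le_mul_of_nonneg_left (mul_one_add_rpow_neg_le hτ α) hη
  have hmomentum : ‖P t - P s‖ ≤ η / (α - 1) * (1 + s) ^ (-(α - 1)) :=
    calc ‖P t - P s‖ ≤ η / α * (1 + s) ^ (-α) :=
          norm_sub_le_of_norm_deriv_le_rpow (by linarith) hη hP hF hs hst
      _ ≤ η / (α - 1) * (1 + s) ^ (-(α - 1)) := by
          gcongr <;> linarith
  rw [← div_eq_inv_mul, Prod.norm_def]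
  exact max_le hposition hmomentum

/-- The finite-time wave operator `W_c(t)(x,p) = (X_c(t) − t v_c(P_c(t)), P_c(t))`
converges as `t → ∞`, uniformly in `(x,p)`, at the rate `C η₀ (1+t)^{-(α-1)}`,
with `C` independent of `c`, `t`, `x`, `p`. -/
theorem stmt13 (α η₀ : ℝ) (hα : 1 < α) (hη : 0 ≤ η₀) :
    ∃ C > 0, ∀ (c : ℝ), 1 ≤ c →
      ∀ (E : ℝ → EuclideanSpace ℝ (Fin 3) → EuclideanSpace ℝ (Fin 3)),
      (∀ t ≥ (0 : ℝ), ∀ y, ‖E t y‖ ≤ η₀ / (1 + t) ^ (α + 1)) →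
      ∀ (X P : EuclideanSpace ℝ (Fin 3) → EuclideanSpace ℝ (Fin 3) → ℝ →
          EuclideanSpace ℝ (Fin 3)),
      (∀ x p, ∀ s ≥ (0 : ℝ), HasDerivAt (X x p) (vel c (P x p s)) s) →
      (∀ x p, ∀ s ≥ (0 : ℝ), HasDerivAt (P x p) (E s (X x p s)) s) →
      (∀ x p, X x p 0 = x ∧ P x p 0 = p) →
      ∃ Wplus : EuclideanSpace ℝ (Fin 3) → EuclideanSpace ℝ (Fin 3) →
          EuclideanSpace ℝ (Fin 3) × EuclideanSpace ℝ (Fin 3),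
        ∀ x p, ∀ t ≥ (0 : ℝ),
          ‖(X x p t - t • vel c (P x p t), P x p t) - Wplus x p‖ ≤
            C * η₀ * (1 + t) ^ (-(α - 1)) := by
  refine ⟨(α - 1)⁻¹, inv_pos.mpr (sub_pos.mpr hα), fun c hc E hE X P hX hP _ => ?_⟩
  have hforce : ∀ x p, ∀ τ ≥ (0 : ℝ), ‖E τ (X x p τ)‖ ≤ η₀ * (1 + τ) ^ (-(α + 1)) :=
    fun x p τ hτ => by
      rw [Real.rpow_neg (by linarith), ← div_eq_mul_inv]
      exact hE τ hτ _
  have hrate : Tendsto (fun t : ℝ => (α - 1)⁻¹ * η₀ * (1 + t) ^ (-(α - 1))) atTop (𝓝 0) := by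
    simpa using ((tendsto_rpow_neg_atTop (sub_pos.mpr hα)).comp
      (tendsto_atTop_add_const_left _ 1 tendsto_id)).const_mul ((α - 1)⁻¹ * η₀)
  choose Wplus hWplus using fun x p => exists_forall_norm_sub_le_of_norm_sub_le hrate
    (norm_waveOp_sub_le (by linarith) hα hη (hX x p) (hP x p) (hforce x p))
  exact ⟨Wplus, hWplus⟩
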